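/- The 5× zoom map z_{5×} : M^(n) → M^(5n), defined tile-wise by the given 5×5 replacement patterns, sends knot n-mosaics to knot 5n-mosaics. -/
import Mathlib


/-- An (unoriented) `n`-mosaic: an `n × n` matrix of tiles `T_0, …, T_10`,
encoded as elements of `Fin 11`. -/
abbrev Mosaic (n : ℕ) : Type := Fin n → Fin n → Fin 11

/-- Does tile `t` have a connection point on its top edge? -/
def cTop (t : Fin 11) : Bool :=
  t.val == 3 || t.val == 4 || t.val == 6 || decide (7 ≤ t.val)

/-- Does tile `t` have a connection point on its bottom edge? -/
def cBot (t : Fin 11) : Bool :=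
  t.val == 1 || t.val == 2 || t.val == 6 || decide (7 ≤ t.val)

/-- Does tile `t` have a connection point on its left edge? -/
def cLeft (t : Fin 11) : Bool :=
  t.val == 1 || t.val == 4 || t.val == 5 || decide (7 ≤ t.val)

/-- Does tile `t` have a connection point on its right edge? -/
def cRight (t : Fin 11) : Bool :=
  t.val == 2 || t.val == 3 || t.val == 5 || decide (7 ≤ t.val)

/-- A knot `n`-mosaic: every tile is suitably connected, i.e. no connection
point lies on the outer boundary, and connection points match across every
shared internal edge. -/
def IsKnotMosaic {n : ℕ} (M : Mosaic n) : Prop :=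
  (∀ i j : Fin n, i.val = 0 → cTop (M i j) = false) ∧
  (∀ i j : Fin n, i.val = n - 1 → cBot (M i j) = false) ∧
  (∀ i j : Fin n, j.val = 0 → cLeft (M i j) = false) ∧
  (∀ i j : Fin n, j.val = n - 1 → cRight (M i j) = false) ∧
  (∀ (i j : Fin n) (h : i.val + 1 < n), cBot (M i j) = cTop (M ⟨i.val + 1, h⟩ j)) ∧
  (∀ (i j : Fin n) (h : j.val + 1 < n), cRight (M i j) = cLeft (M i ⟨j.val + 1, h⟩))

/-- The 5×5 replacement blocks of the `5×` zoom map: the block replacing the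
tile `T_k` is `zoomBlock k`. -/
def zoomBlock : Fin 11 → Matrix (Fin 5) (Fin 5) (Fin 11) :=
  ![!![0, 0, 0, 0, 0;
      0, 0, 0, 0, 0;
      0, 0, 0, 0, 0;
      0, 0, 0, 0, 0;
      0, 0, 0, 0, 0],
    !![0, 0, 0, 0, 0;
      0, 0, 0, 0, 0;
      5, 5, 1, 0, 0;
      0, 0, 6, 0, 0;
      0, 0, 6, 0, 0],
    !![0, 0, 0, 0, 0;
      0, 0, 0, 0, 0;
      0, 0, 2, 5, 5;
      0, 0, 6, 0, 0;
      0, 0, 6, 0, 0],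
    !![0, 0, 6, 0, 0;
      0, 0, 6, 0, 0;
      0, 0, 3, 5, 5;
      0, 0, 0, 0, 0;
      0, 0, 0, 0, 0],
    !![0, 0, 6, 0, 0;
      0, 0, 6, 0, 0;
      5, 5, 4, 0, 0;
      0, 0, 0, 0, 0;
      0, 0, 0, 0, 0],
    !![0, 0, 0, 0, 0;
      0, 0, 0, 0, 0;
      5, 5, 5, 5, 5;
      0, 0, 0, 0, 0;
      0, 0, 0, 0, 0],
    !![0, 0, 6, 0, 0;
      0, 0, 6, 0, 0;
      0, 0, 6, 0, 0;
      0, 0, 6, 0, 0;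
      0, 0, 6, 0, 0],
    !![0, 0, 6, 0, 0;
      0, 0, 3, 1, 0;
      5, 1, 0, 3, 5;
      0, 3, 1, 0, 0;
      0, 0, 6, 0, 0],
    !![0, 0, 6, 0, 0;
      0, 2, 4, 0, 0;
      5, 4, 0, 2, 5;
      0, 0, 2, 4, 0;
      0, 0, 6, 0, 0],
    !![0, 0, 3, 1, 0;
      2, 5, 1, 6, 0;
      4, 2, 10, 4, 2;
      0, 6, 3, 5, 4;
      0, 3, 1, 0, 0],
    !![0, 0, 6, 0, 0;
      0, 0, 6, 0, 0;
      5, 5, 10, 5, 5;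
      0, 0, 6, 0, 0;
      0, 0, 6, 0, 0]]

/-- The zoom map with ratio `5×`: each tile at position `(i, j)` is replaced
by its 5×5 replacement block, placed at rows `5i, …, 5i+4` and columns
`5j, …, 5j+4`. -/
def zoom {n : ℕ} (M : Mosaic n) : Mosaic (5 * n) :=
  fun i j =>
    zoomBlock (M ⟨i.val / 5, by have := i.isLt; omega⟩ ⟨j.val / 5, by have := j.isLt; omega⟩)
      ⟨i.val % 5, by omega⟩ ⟨j.val % 5, by omega⟩


lemma blkTop : ∀ (k : Fin 11) (r c : Fin 5), r.val = 0 →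
    cTop (zoomBlock k r c) = (cTop k && decide (c.val = 2)) := by decide

lemma blkBot : ∀ (k : Fin 11) (r c : Fin 5), r.val = 4 →
    cBot (zoomBlock k r c) = (cBot k && decide (c.val = 2)) := by decide

lemma blkLeft : ∀ (k : Fin 11) (r c : Fin 5), c.val = 0 →
    cLeft (zoomBlock k r c) = (cLeft k && decide (r.val = 2)) := by decide

lemma blkRight : ∀ (k : Fin 11) (r c : Fin 5), c.val = 4 →
    cRight (zoomBlock k r c) = (cRight k && decide (r.val = 2)) := by decide

lemma blkVert : ∀ (k : Fin 11) (r c r' : Fin 5), r'.val = r.val + 1 →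
    cBot (zoomBlock k r c) = cTop (zoomBlock k r' c) := by decide

lemma blkHoriz : ∀ (k : Fin 11) (r c c' : Fin 5), c'.val = c.val + 1 →
    cRight (zoomBlock k r c) = cLeft (zoomBlock k r c') := by decide

/-- The `5×` zoom map sends knot `n`-mosaics to knot `5n`-mosaics. -/
theorem zoom_isKnotMosaic {n : ℕ} (M : Mosaic n) (hM : IsKnotMosaic M) :
    IsKnotMosaic (zoom M) := by
  obtain ⟨h1, h2, h3, h4, h5, h6⟩ := hM
  refine ⟨?_, ?_, ?_, ?_, ?_, ?_⟩
  · intro i j h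
    simp only [zoom]
    rw [blkTop _ _ _ (show i.val % 5 = 0 by omega)]
    rw [h1 _ _ (show i.val / 5 = 0 by omega)]
    simp
  · intro i j h
    have hn : 0 < n := by have := i.isLt; omega
    simp only [zoom]
    rw [blkBot _ _ _ (show i.val % 5 = 4 by omega)]
    rw [h2 _ _ (show i.val / 5 = n - 1 by omega)]
    simp
  · intro i j h
    simp only [zoom]
    rw [blkLeft _ _ _ (show j.val % 5 = 0 by omega)]
    rw [h3 _ _ (show j.val / 5 = 0 by omega)]
    simp
  · intro i j h
    have hn : 0 < n := by have := i.isLt; omega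
    simp only [zoom]
    rw [blkRight _ _ _ (show j.val % 5 = 4 by omega)]
    rw [h4 _ _ (show j.val / 5 = n - 1 by omega)]
    simp
  · intro i j h
    simp only [zoom]
    rcases Nat.lt_or_ge (i.val % 5) 4 with h4' | h4'
    · simp only [show ((⟨i.val + 1, h⟩ : Fin (5 * n)).val) = i.val + 1 from rfl,
        show (i.val + 1) / 5 = i.val / 5 from by omega,
        show (i.val + 1) % 5 = i.val % 5 + 1 from by omega]
      exact blkVert _ _ _ _ rfl
    · simp only [show ((⟨i.val + 1, h⟩ : Fin (5 * n)).val) = i.val + 1 from rfl,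
        show (i.val + 1) / 5 = i.val / 5 + 1 from by omega,
        show (i.val + 1) % 5 = 0 from by omega]
      rw [blkBot _ _ _ (show i.val % 5 = 4 by omega), blkTop _ _ _ rfl]
      rw [h5 ⟨i.val / 5, by omega⟩ ⟨j.val / 5, by omega⟩ (show i.val / 5 + 1 < n by omega)]
  · intro i j h
    simp only [zoom]
    rcases Nat.lt_or_ge (j.val % 5) 4 with h4' | h4'
    · simp only [show ((⟨j.val + 1, h⟩ : Fin (5 * n)).val) = j.val + 1 from rfl,
        show (j.val + 1) / 5 = j.val / 5 from by omega,
        show (j.val + 1) % 5 = j.val % 5 + 1 from by omega]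
      exact blkHoriz _ _ _ _ rfl
    · simp only [show ((⟨j.val + 1, h⟩ : Fin (5 * n)).val) = j.val + 1 from rfl,
        show (j.val + 1) / 5 = j.val / 5 + 1 from by omega,
        show (j.val + 1) % 5 = 0 from by omega]
      rw [blkRight _ _ _ (show j.val % 5 = 4 by omega), blkLeft _ _ _ rfl]
      rw [h6 ⟨i.val / 5, by omega⟩ ⟨j.val / 5, by omega⟩ (show j.val / 5 + 1 < n by omega)]
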